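/- arXiv:1306.6457 — 3 statements merged into one kernel-verified Lean document; each statement's English description precedes it below -/
import Mathlib

section
/- For every complex number k with nonnegative imaginary part, every real x ≥ 0, and every α ∈ [0,1], one has |e^{2ikx} − 1| ≤ (2|k|x)^α · (1 + e^{−2 Im(k) x}). -/
open Complex Real

/-
With z = 2ikx we have Re z = -2 Im(k) x ≤ 0, so |e^z - 1| is bounded both by |z| = 2|k|x (mean
value theorem: the derivative z e^{tz} of t ↦ e^{tz} has norm at most |z| on [0, 1]) and by the
triangle bound 1 + e^{Re z} ≥ 1. The first bound is the right one when 2|k|x ≤ 1, the second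
otherwise, and in either case it is at most (2|k|x)^α (1 + e^{Re z}).
-/

theorem Complex.norm_exp_sub_one_le_norm_of_re_nonpos {z : ℂ} (hz : z.re ≤ 0) :
    ‖exp z - 1‖ ≤ ‖z‖ := by
  have hderiv : ∀ t ∈ Set.Icc (0 : ℝ) 1, HasDerivWithinAt (fun t : ℝ => exp (t * z))
      (z * exp (t * z)) (Set.Icc 0 1) t := fun t _ => by
    have hlin : HasDerivAt (fun t : ℝ => (t : ℂ) * z) z t := by
      simpa using (ofRealCLM.hasDerivAt (x := t)).mul_const z
    simpa [mul_comm] using hlin.cexp.hasDerivWithinAt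
  have hbound : ∀ t ∈ Set.Icc (0 : ℝ) 1, ‖z * exp (t * z)‖ ≤ ‖z‖ := fun t ht => by
    have hre : ((t : ℂ) * z).re ≤ 0 := by
      simpa using mul_nonpos_of_nonneg_of_nonpos ht.1 hz
    rw [norm_mul, norm_exp]
    exact mul_le_of_le_one_right (norm_nonneg z) (Real.exp_le_one_iff.mpr hre)
  simpa using (convex_Icc (0 : ℝ) 1).norm_image_sub_le_of_norm_hasDerivWithin_le hderiv hbound
    (Set.left_mem_Icc.mpr zero_le_one) (Set.right_mem_Icc.mpr zero_le_one)

theorem Complex.norm_exp_sub_one_le_one_add_exp_re (z : ℂ) :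
    ‖exp z - 1‖ ≤ 1 + Real.exp z.re := by
  simpa [norm_exp, add_comm] using norm_sub_le (exp z) 1

theorem Real.le_rpow_mul_of_le_of_le {a b c α : ℝ} (ha : 0 ≤ a) (hb : 1 ≤ b) (hα₀ : 0 ≤ α)
    (hα₁ : α ≤ 1) (hca : c ≤ a) (hcb : c ≤ b) : c ≤ a ^ α * b := by
  rcases le_total a 1 with ha₁ | ha₁
  · calc c ≤ a := hca
      _ ≤ a ^ α := Real.self_le_rpow_of_le_one ha ha₁ hα₁
      _ ≤ a ^ α * b := le_mul_of_one_le_right (Real.rpow_nonneg ha α) hb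
  · calc c ≤ b := hcb
      _ ≤ a ^ α * b := le_mul_of_one_le_left (by linarith) (Real.one_le_rpow ha₁ hα₀)

theorem stmt_0 (k : ℂ) (hk : 0 ≤ k.im) (x : ℝ) (hx : 0 ≤ x) (α : ℝ)
    (hα : α ∈ Set.Icc (0:ℝ) 1) :
    ‖Complex.exp (2 * Complex.I * k * x) - 1‖ ≤
      (2 * ‖k‖ * x) ^ α * (1 + Real.exp (-2 * k.im * x)) := by
  set z : ℂ := 2 * I * k * x
  have hre : z.re = -2 * k.im * x := by simp [z]
  have hnorm : ‖z‖ = 2 * ‖k‖ * x := by simp [z, abs_of_nonneg hx]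
  have hre_nonpos : z.re ≤ 0 := by rw [hre]; nlinarith
  refine Real.le_rpow_mul_of_le_of_le (by positivity) ?_ hα.1 hα.2 ?_ ?_
  · linarith [Real.exp_pos (-2 * k.im * x)]
  · exact hnorm ▸ norm_exp_sub_one_le_norm_of_re_nonpos hre_nonpos
  · exact hre ▸ norm_exp_sub_one_le_one_add_exp_re z
end

section
/- Let p : (0,∞) → ℝ be measurable with ∫_0^∞ r |p(r)| dr < ∞. Define A₀(z,w) = (1/2) ∫_{w/2}^{z/2} p(t) dt and recursively Aₙ(z,w) = (1/4) ∫_w^z ∫_0^w p((t+s)/2) A_{n−1}(t,s) ds dt for 0 ≤ w ≤ z. Then for all n ≥ 0, |Aₙ(z,w)| ≤ (1/(2 n!)) ∫_{w/2}^{(z+w)/2} |p(r)| dr · ( (1/2) ∫_0^w ∫_{s/2}^{(z+s)/2} |p(r)| dr ds )ⁿ. -/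
/-!
Fix `z` and bound `A n t w` for all `0 < w ≤ t ≤ z` by the value at `z` of the majorant, by
induction on `n`. Write `F s = ∫_{s/2}^{(z+s)/2} |p|` and `G w = ∫_0^w F`. In the recursion,
Tonelli lets one integrate first in `t`: the substitution `r = (t + s)/2` gives
`∫_w^t |p((t+s)/2)| dt ≤ 2 F w`. What remains is `∫_0^w F G^n = G(w)^(n+1)/(n+1)`, which holds
because `G` is an absolutely continuous primitive of `F`. This needs `F` to be integrable near
`0`, and that follows from `∫_0^∞ ∫_{s/2}^∞ |p| ds = ∫_0^∞ 2r |p(r)| dr < ∞`.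
-/

open MeasureTheory Real Set intervalIntegral
open scoped Interval

theorem integrableOn_Ici_of_integrableOn_id_mul {f : ℝ → ℝ}
    (hf : IntegrableOn (fun r => r * f r) (Ioi 0)) {a : ℝ} (ha : 0 < a) :
    IntegrableOn f (Ici a) := by
  have hmul : IntegrableOn (fun r => r⁻¹ * (r * f r)) (Ici a) := by
    refine Integrable.bdd_mul (c := a⁻¹) (hf.mono_set fun r hr => ha.trans_le hr) ?_ ?_
    · exact measurable_inv.aestronglyMeasurable
    · filter_upwards [ae_restrict_mem measurableSet_Ici] with r hr
      rw [norm_inv, Real.norm_of_nonneg (ha.le.trans hr)]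
      exact inv_anti₀ ha hr
  exact hmul.congr_fun (fun r hr => inv_mul_cancel_left₀ (ha.trans_le hr).ne' _)
    measurableSet_Ici

theorem intervalIntegrable_of_integrableOn_id_mul {f : ℝ → ℝ}
    (hf : IntegrableOn (fun r => r * f r) (Ioi 0)) {a b : ℝ} (ha : 0 < a) (hb : 0 < b) :
    IntervalIntegrable f volume a b :=
  ((integrableOn_Ici_of_integrableOn_id_mul hf (lt_min ha hb)).mono_set
    Icc_subset_Ici_self).intervalIntegrable

theorem measurable_setIntegral_Ioc {g a b : ℝ → ℝ} (hg : Measurable g) (ha : Measurable a)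
    (hb : Measurable b) : Measurable fun x => ∫ u in Ioc (a x) (b x), g u := by
  set S : Set (ℝ × ℝ) := {q | q.2 ∈ Ioc (a q.1) (b q.1)}
  have hS : MeasurableSet S :=
    (measurableSet_lt (ha.comp measurable_fst) measurable_snd).inter
      (measurableSet_le measurable_snd (hb.comp measurable_fst))
  have hind : StronglyMeasurable (S.indicator fun q => g q.2) :=
    ((hg.comp measurable_snd).indicator hS).stronglyMeasurable
  convert (hind.integral_prod_right' (ν := volume)).measurable using 2 with x
  rw [← MeasureTheory.integral_indicator measurableSet_Ioc]
  rfl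

theorem measurable_intervalIntegral_of_measurable {g a b : ℝ → ℝ} (hg : Measurable g)
    (ha : Measurable a) (hb : Measurable b) : Measurable fun x => ∫ u in a x..b x, g u :=
  (measurable_setIntegral_Ioc hg ha hb).sub (measurable_setIntegral_Ioc hg hb ha)

theorem AbsolutelyContinuousOnInterval.fun_pow {f : ℝ → ℝ} {a b : ℝ}
    (hf : AbsolutelyContinuousOnInterval f a b) (n : ℕ) :
    AbsolutelyContinuousOnInterval (fun x => f x ^ n) a b := by
  induction n with
  | zero =>
    simpa using (LipschitzWith.const (1 : ℝ)).lipschitzOnWith.absolutelyContinuousOnInterval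
  | succ n ih => simpa only [pow_succ] using ih.fun_mul hf

theorem integral_mul_primitive_pow {g : ℝ → ℝ} {a b : ℝ} (hg : IntervalIntegrable g volume a b)
    (n : ℕ) :
    ∫ x in a..b, g x * (∫ t in a..x, g t) ^ n = (∫ t in a..b, g t) ^ (n + 1) / (n + 1) := by
  set γ := fun x => ∫ t in a..x, g t
  have hderiv : ∀ᵐ x, x ∈ Ι a b →
      (n + 1 : ℝ) * (g x * γ x ^ n) = deriv (fun x => γ x ^ (n + 1)) x := by
    filter_upwards [hg.ae_hasDerivAt_integral] with x hx hxab
    rw [((hx (uIoc_subset_uIcc hxab) a left_mem_uIcc).fun_pow (n + 1)).deriv]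
    push_cast
    ring
  have hftc : ∫ x in a..b, deriv (fun x => γ x ^ (n + 1)) x = γ b ^ (n + 1) := by
    rw [((hg.absolutelyContinuousOnInterval_intervalIntegral left_mem_uIcc).fun_pow
      (n + 1)).integral_deriv_eq_sub]
    simp [γ]
  rw [← integral_congr_ae hderiv, intervalIntegral.integral_const_mul] at hftc
  rw [eq_div_iff (by positivity), ← hftc]
  ring

theorem lintegral_Ioi_lintegral_Ioi_half {f : ℝ → ENNReal} (hf : Measurable f) :
    ∫⁻ s in Ioi 0, ∫⁻ r in Ioi (s / 2), f r = ∫⁻ r, ENNReal.ofReal (2 * r) * f r := by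
  set S : Set (ℝ × ℝ) := {q | q.1 / 2 < q.2}
  have hS : MeasurableSet S := measurableSet_lt (measurable_fst.div_const 2) measurable_snd
  calc ∫⁻ s in Ioi 0, ∫⁻ r in Ioi (s / 2), f r
      = ∫⁻ s in Ioi 0, ∫⁻ r, S.indicator (fun q => f q.2) (s, r) := by
        refine lintegral_congr fun s => ?_
        rw [← lintegral_indicator measurableSet_Ioi]
        rfl
    _ = ∫⁻ r, ∫⁻ s in Ioi 0, S.indicator (fun q => f q.2) (s, r) :=
        lintegral_lintegral_swap ((hf.comp measurable_snd).indicator hS).aemeasurable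
    _ = ∫⁻ r, ENNReal.ofReal (2 * r) * f r := by
        refine lintegral_congr fun r => ?_
        have hsec : ∀ s, S.indicator (fun q => f q.2) (s, r)
            = (Iio (2 * r)).indicator (fun _ => f r) s := fun s => by
          simp only [S, indicator_apply, mem_ofPred_eq, mem_Iio,
            div_lt_iff₀' (two_pos : (0 : ℝ) < 2)]
        simp_rw [hsec]
        rw [lintegral_indicator measurableSet_Iio, setLIntegral_const,
          Measure.restrict_apply measurableSet_Iio, Iio_inter_Ioi, Real.volume_Ioo, sub_zero,
          mul_comm]

noncomputable def absBand (p : ℝ → ℝ) (z s : ℝ) : ℝ := ∫ r in s / 2..(z + s) / 2, |p r|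

noncomputable def absBandIntegral (p : ℝ → ℝ) (z w : ℝ) : ℝ := ∫ s in (0 : ℝ)..w, absBand p z s

theorem absBand_nonneg (p : ℝ → ℝ) {z : ℝ} (hz : 0 ≤ z) (s : ℝ) : 0 ≤ absBand p z s :=
  integral_nonneg (by linarith) fun _ _ => abs_nonneg _

theorem absBandIntegral_nonneg (p : ℝ → ℝ) {z w : ℝ} (hz : 0 ≤ z) (hw : 0 ≤ w) :
    0 ≤ absBandIntegral p z w :=
  integral_nonneg hw fun s _ => absBand_nonneg p hz s

theorem measurable_absBand {p : ℝ → ℝ} (hpm : Measurable p) (z : ℝ) :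
    Measurable (absBand p z) :=
  measurable_intervalIntegral_of_measurable hpm.abs (measurable_id.div_const 2)
    ((measurable_const.add measurable_id).div_const 2)

theorem integrableOn_absBand {p : ℝ → ℝ} (hpm : Measurable p)
    (hp : IntegrableOn (fun r => r * |p r|) (Ioi 0)) {z : ℝ} (hz : 0 ≤ z) :
    IntegrableOn (absBand p z) (Ioi 0) := by
  refine ⟨(measurable_absBand hpm z).aestronglyMeasurable, ?_⟩
  have hband : ∀ s, ‖absBand p z s‖ₑ ≤ ∫⁻ r in Ioi (s / 2), ‖p r‖ₑ := fun s => calc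
    ‖absBand p z s‖ₑ ≤ ∫⁻ r in Ioc (s / 2) ((z + s) / 2), ‖|p r|‖ₑ := by
      rw [absBand, integral_of_le (by linarith)]
      exact enorm_integral_le_lintegral_enorm _
    _ ≤ ∫⁻ r in Ioi (s / 2), ‖p r‖ₑ := by
      simp only [enorm_abs]
      exact lintegral_mono_set Ioc_subset_Ioi_self
  have hweight : ∫⁻ r, ENNReal.ofReal (2 * r) * ‖p r‖ₑ = 2 * ∫⁻ r in Ioi 0, ‖r * |p r|‖ₑ := by
    rw [← setLIntegral_eq_of_support_subset (s := Ioi 0), ← lintegral_const_mul' _ _ (by simp)]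
    · refine setLIntegral_congr_fun measurableSet_Ioi fun r hr => ?_
      rw [enorm_mul, enorm_abs, Real.enorm_of_nonneg hr.le, ENNReal.ofReal_mul zero_le_two]
      simp [mul_assoc]
    · refine Function.support_subset_iff'.2 fun r hr => ?_
      simp only [mem_Ioi, not_lt] at hr
      simp [ENNReal.ofReal_of_nonpos (by linarith : 2 * r ≤ 0)]
  calc ∫⁻ s in Ioi 0, ‖absBand p z s‖ₑ ≤ ∫⁻ s in Ioi 0, ∫⁻ r in Ioi (s / 2), ‖p r‖ₑ :=
        lintegral_mono hband
    _ = 2 * ∫⁻ r in Ioi 0, ‖r * |p r|‖ₑ := by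
        rw [lintegral_Ioi_lintegral_Ioi_half hpm.enorm, hweight]
    _ < ⊤ := ENNReal.mul_lt_top (by simp) hp.2

theorem lintegral_abs_comp_half_le_absBand {p : ℝ → ℝ}
    (hp : IntegrableOn (fun r => r * |p r|) (Ioi 0))
    {s w t z : ℝ} (hs : 0 < s) (hsw : s ≤ w) (hwt : w ≤ t) (htz : t ≤ z) :
    ∫⁻ t' in Ioc w t, ENNReal.ofReal |p ((t' + s) / 2)| ≤ ENNReal.ofReal (2 * absBand p z w) := by
  have hcomp : IntervalIntegrable (fun t' => |p ((t' + s) / 2)|) volume w t := by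
    have := ((intervalIntegrable_of_integrableOn_id_mul hp (a := (w + s) / 2) (b := (t + s) / 2)
      (by linarith) (by linarith)).comp_mul_left (c := 2⁻¹)).comp_add_right s
    convert this using 4 <;> ring
  have hchange :
      ∫ t' in w..t, |p ((t' + s) / 2)| = 2 * ∫ r in (w + s) / 2..(t + s) / 2, |p r| := by
    simpa only [smul_eq_mul, ← add_div] using
      integral_comp_div_add (fun r => |p r|) (a := w) (b := t) two_ne_zero (s / 2)
  rw [← ofReal_integral_eq_lintegral_ofReal
    ((intervalIntegrable_iff_integrableOn_Ioc_of_le hwt).1 hcomp)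
    (ae_of_all _ fun _ => abs_nonneg _), ← integral_of_le hwt, hchange]
  refine ENNReal.ofReal_le_ofReal (mul_le_mul_of_nonneg_left ?_ zero_le_two)
  refine integral_mono_interval (by linarith) (by linarith) (by linarith)
    (ae_of_all _ fun _ => abs_nonneg _) ?_
  exact intervalIntegrable_of_integrableOn_id_mul hp (by linarith) (by linarith)

theorem abs_integral_integral_kernel_le {p : ℝ → ℝ} (hpm : Measurable p)
    (hp : IntegrableOn (fun r => r * |p r|) (Ioi 0)) {B : ℝ → ℝ → ℝ} {Φ : ℝ → ℝ} {w t z : ℝ}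
    (hw : 0 ≤ w) (hwt : w ≤ t) (htz : t ≤ z) (hΦ : IntegrableOn Φ (Ioc 0 w))
    (hΦ0 : ∀ s ∈ Ioc 0 w, 0 ≤ Φ s) (hB : ∀ t' ∈ Ioc w t, ∀ s ∈ Ioc 0 w, |B t' s| ≤ Φ s) :
    |∫ t' in w..t, ∫ s in (0 : ℝ)..w, p ((t' + s) / 2) * B t' s|
      ≤ 2 * absBand p z w * ∫ s in (0 : ℝ)..w, Φ s := by
  rw [integral_of_le hw]
  -- Lower Lebesgue integrals need no integrability or measurability of `B`.
  have hK : 0 ≤ 2 * absBand p z w := mul_nonneg zero_le_two (absBand_nonneg p (by linarith) w)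
  have hkernel : AEMeasurable (Function.uncurry fun t' s =>
      ENNReal.ofReal |p ((t' + s) / 2)| * ENNReal.ofReal (Φ s))
      ((volume.restrict (Ioc w t)).prod (volume.restrict (Ioc 0 w))) :=
    (ENNReal.measurable_ofReal.comp
      (hpm.comp ((measurable_fst.add measurable_snd).div_const 2)).abs).aemeasurable.mul
      (ENNReal.measurable_ofReal.comp_aemeasurable hΦ.aemeasurable).comp_snd
  rw [← ENNReal.ofReal_le_ofReal_iff (mul_nonneg hK (setIntegral_nonneg measurableSet_Ioc hΦ0)),
    ← Real.enorm_eq_ofReal_abs]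
  calc ‖∫ t' in w..t, ∫ s in (0 : ℝ)..w, p ((t' + s) / 2) * B t' s‖ₑ
      ≤ ∫⁻ t' in Ioc w t, ‖∫ s in (0 : ℝ)..w, p ((t' + s) / 2) * B t' s‖ₑ := by
        rw [integral_of_le hwt]
        exact enorm_integral_le_lintegral_enorm _
    _ ≤ ∫⁻ t' in Ioc w t, ∫⁻ s in Ioc 0 w,
          ENNReal.ofReal |p ((t' + s) / 2)| * ENNReal.ofReal (Φ s) := by
        refine setLIntegral_mono' measurableSet_Ioc fun t' ht' => ?_
        rw [integral_of_le hw]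
        refine (enorm_integral_le_lintegral_enorm _).trans
          (setLIntegral_mono' measurableSet_Ioc fun s hs => ?_)
        rw [enorm_mul, Real.enorm_eq_ofReal_abs, Real.enorm_eq_ofReal_abs]
        gcongr
        exact hB t' ht' s hs
    _ = ∫⁻ s in Ioc 0 w, ENNReal.ofReal (Φ s) *
          ∫⁻ t' in Ioc w t, ENNReal.ofReal |p ((t' + s) / 2)| := by
        rw [lintegral_lintegral_swap hkernel]
        refine lintegral_congr fun s => ?_
        rw [← lintegral_const_mul' _ _ ENNReal.ofReal_ne_top]
        simp_rw [mul_comm]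
    _ ≤ ∫⁻ s in Ioc 0 w, ENNReal.ofReal (Φ s) * ENNReal.ofReal (2 * absBand p z w) := by
        refine setLIntegral_mono' measurableSet_Ioc fun s hs => ?_
        gcongr
        exact lintegral_abs_comp_half_le_absBand hp hs.1 hs.2 hwt htz
    _ = ENNReal.ofReal (2 * absBand p z w * ∫ s in Ioc 0 w, Φ s) := by
        rw [lintegral_mul_const' _ _ ENNReal.ofReal_ne_top, mul_comm, ENNReal.ofReal_mul hK,
          ofReal_integral_eq_lintegral_ofReal hΦ ((ae_restrict_iff' measurableSet_Ioc).2
            (ae_of_all _ hΦ0))]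

noncomputable def iterateMajorant (p : ℝ → ℝ) (n : ℕ) (z w : ℝ) : ℝ :=
  1 / (2 * n.factorial) * absBand p z w * (1 / 2 * absBandIntegral p z w) ^ n

theorem intervalIntegrable_absBand {p : ℝ → ℝ} (hpm : Measurable p)
    (hp : IntegrableOn (fun r => r * |p r|) (Ioi 0)) {z w : ℝ} (hz : 0 ≤ z) (hw : 0 ≤ w) :
    IntervalIntegrable (absBand p z) volume 0 w :=
  (intervalIntegrable_iff_integrableOn_Ioc_of_le hw).2
    ((integrableOn_absBand hpm hp hz).mono_set Ioc_subset_Ioi_self)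

theorem iterateMajorant_nonneg (p : ℝ → ℝ) (n : ℕ) {z w : ℝ} (hz : 0 ≤ z) (hw : 0 ≤ w) :
    0 ≤ iterateMajorant p n z w := by
  have := absBand_nonneg p hz w
  have := absBandIntegral_nonneg p hz hw
  unfold iterateMajorant
  positivity

theorem iterateMajorant_eq (p : ℝ → ℝ) (n : ℕ) (z w : ℝ) :
    iterateMajorant p n z w
      = 1 / (2 * n.factorial * 2 ^ n) * (absBand p z w * absBandIntegral p z w ^ n) := by
  rw [iterateMajorant, mul_pow, one_div_pow]
  ring

theorem intervalIntegrable_iterateMajorant {p : ℝ → ℝ} (hpm : Measurable p)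
    (hp : IntegrableOn (fun r => r * |p r|) (Ioi 0)) (n : ℕ) {z w : ℝ} (hz : 0 ≤ z)
    (hw : 0 ≤ w) : IntervalIntegrable (iterateMajorant p n z) volume 0 w := by
  have hF := intervalIntegrable_absBand hpm hp hz hw
  have hG : ContinuousOn (absBandIntegral p z) [[0, w]] :=
    continuousOn_primitive_interval' hF left_mem_uIcc
  rw [funext (iterateMajorant_eq p n z)]
  exact (hF.mul_continuousOn (hG.pow n)).const_mul _

theorem iterateMajorant_succ {p : ℝ → ℝ} (hpm : Measurable p)
    (hp : IntegrableOn (fun r => r * |p r|) (Ioi 0)) (n : ℕ) {z w : ℝ} (hz : 0 ≤ z)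
    (hw : 0 ≤ w) :
    1 / 4 * (2 * absBand p z w * ∫ s in (0 : ℝ)..w, iterateMajorant p n z s)
      = iterateMajorant p (n + 1) z w := by
  simp only [iterateMajorant_eq, intervalIntegral.integral_const_mul, absBandIntegral]
  rw [integral_mul_primitive_pow (intervalIntegrable_absBand hpm hp hz hw) n, Nat.factorial_succ]
  push_cast
  field_simp
  ring

theorem abs_iterate_le_iterateMajorant {p : ℝ → ℝ} (hpm : Measurable p)
    (hp : IntegrableOn (fun r => r * |p r|) (Ioi 0)) {A : ℕ → ℝ → ℝ → ℝ}
    (h0 : ∀ z w : ℝ, A 0 z w = (1 / 2) * ∫ t in (w / 2)..(z / 2), p t)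
    (hrec : ∀ n : ℕ, ∀ z w : ℝ, A (n + 1) z w =
      (1 / 4) * ∫ t in w..z, ∫ s in (0:ℝ)..w, p ((t + s) / 2) * A n t s)
    (n : ℕ) {t w z : ℝ} (hw : 0 < w) (hwt : w ≤ t) (htz : t ≤ z) :
    |A n t w| ≤ iterateMajorant p n z w := by
  induction n generalizing t w with
  | zero =>
    rw [h0, abs_mul, abs_of_pos one_half_pos]
    calc 1 / 2 * |∫ r in w / 2..t / 2, p r| ≤ 1 / 2 * ∫ r in w / 2..t / 2, |p r| := by
          gcongr
          exact abs_integral_le_integral_abs (by linarith)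
      _ ≤ 1 / 2 * absBand p z w := by
          gcongr
          exact integral_mono_interval le_rfl (by linarith) (by linarith)
            (ae_of_all _ fun _ => abs_nonneg _)
            (intervalIntegrable_of_integrableOn_id_mul hp (by linarith) (by linarith))
      _ = iterateMajorant p 0 z w := by simp [iterateMajorant]
  | succ n ih =>
    have hz : 0 ≤ z := by linarith
    rw [hrec, abs_mul, abs_of_pos (by norm_num), ← iterateMajorant_succ hpm hp n hz hw.le]
    gcongr
    exact abs_integral_integral_kernel_le hpm hp hw.le hwt htz
      ((intervalIntegrable_iff_integrableOn_Ioc_of_le hw.le).1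
        (intervalIntegrable_iterateMajorant hpm hp n hz hw.le))
      (fun s hs => iterateMajorant_nonneg p n hz hs.1.le)
      (fun t' ht' s hs => ih hs.1 (hs.2.trans ht'.1.le) (ht'.2.trans htz))

theorem stmt_7 (p : ℝ → ℝ) (hpm : Measurable p)
    (hp : IntegrableOn (fun r => r * |p r|) (Ioi 0))
    (A : ℕ → ℝ → ℝ → ℝ)
    (h0 : ∀ z w : ℝ, A 0 z w = (1 / 2) * ∫ t in (w / 2)..(z / 2), p t)
    (hrec : ∀ n : ℕ, ∀ z w : ℝ, A (n + 1) z w =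
      (1 / 4) * ∫ t in w..z, ∫ s in (0:ℝ)..w, p ((t + s) / 2) * A n t s) :
    ∀ n : ℕ, ∀ z w : ℝ, 0 ≤ w → w ≤ z →
      |A n z w| ≤ (1 / (2 * n.factorial)) * (∫ r in (w / 2)..((z + w) / 2), |p r|) *
        ((1 / 2) * ∫ s in (0:ℝ)..w, ∫ r in (s / 2)..((z + s) / 2), |p r|) ^ n := by
  intro n z w hw hwz
  -- At `w = 0` the band `[0, z / 2]` may carry a non-integrable `p`, so this case is computed
  -- directly instead of through the induction.
  rcases hw.eq_or_lt with rfl | hw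
  · cases n with
    | zero =>
      simpa [h0] using abs_integral_le_integral_abs (f := p) (by linarith : (0 : ℝ) ≤ z / 2)
    | succ n => simp [hrec]
  · exact abs_iterate_le_iterateMajorant hpm hp h0 hrec n hw hwz le_rfl
end

section
/- Let q : (0,∞) → [0,∞) be measurable and e : [0,∞) → ℂ be a C² function satisfying Im(e''(x) · conj(e(x))) = q(x) |e(x)|² for all x ≥ 0, with e(x) → e^{ikx} asymptotics in the sense that Im(e'(x) conj(e(x))) → k as x → ∞ for a real k, and suppose e(0) = 0. Then k = ∫_0^∞ q(x) |e(x)|² dx ≥ 0, and k > 0 provided q > 0 on a set of positive measure where e ≠ 0. -/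
/-!
The quantity `Im(e' · conj e)` has derivative `Im(e'' · conj e) = q |e|² ≥ 0`, because the
extra term `|e'|²` is real. Integrating over `(0, ∞)`, with value `0` at `x = 0` (as `e 0 = 0`)
and limit `k` at infinity, gives `k = ∫₀^∞ q |e|²`; the integrand is nonnegative, and it is
positive exactly where `q > 0` and `e ≠ 0`.
-/

open MeasureTheory Real Set Complex ComplexConjugate

theorem HasDerivAt.im_mul_conj {f f' : ℝ → ℂ} {f'' : ℂ} {x : ℝ}
    (hf : HasDerivAt f (f' x) x) (hf' : HasDerivAt f' f'' x) :
    HasDerivAt (fun y => (f' y * conj (f y)).im) (f'' * conj (f x)).im x := by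
  have hreal : (f' x * conj (f' x)).im = 0 := by rw [Complex.mul_conj]; simp
  have hprod := Complex.imCLM.hasFDerivAt.comp_hasDerivAt x (hf'.mul hf.star)
  simpa only [Function.comp_def, Pi.mul_apply, Complex.star_def, Complex.imCLM_apply,
    Complex.add_im, hreal, add_zero] using hprod

theorem ContDiff.hasDerivAt_im_deriv_mul_conj {e : ℝ → ℂ} (he : ContDiff ℝ 2 e) (x : ℝ) :
    HasDerivAt (fun y => (deriv e y * conj (e y)).im)
      (deriv (deriv e) x * conj (e x)).im x := by
  obtain ⟨hd, -, hd'⟩ := contDiff_succ_iff_deriv.mp (show ContDiff ℝ (1 + 1) e from he)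
  exact (hd x).hasDerivAt.im_mul_conj ((hd'.differentiable one_ne_zero) x).hasDerivAt

theorem integrableOn_Ioi_and_integral_eq_of_hasDerivAt_of_nonneg {F g : ℝ → ℝ} {a k : ℝ}
    (hcont : ContinuousWithinAt F (Ici a) a) (hderiv : ∀ x ∈ Ioi a, HasDerivAt F (g x) x)
    (hg : ∀ x ∈ Ioi a, 0 ≤ g x) (hF : Filter.Tendsto F Filter.atTop (nhds k)) :
    IntegrableOn g (Ioi a) ∧ ∫ x in Ioi a, g x = k - F a :=
  have hint := integrableOn_Ioi_deriv_of_nonneg hcont hderiv hg hF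
  ⟨hint, integral_Ioi_of_hasDerivAt_of_tendsto hcont hderiv hint hF⟩

theorem stmt_17_general (q : ℝ → ℝ) (hqnn : ∀ x, 0 ≤ q x)
    (e : ℝ → ℂ) (he : ContDiff ℝ 2 e) (he0 : e 0 = 0) (k : ℝ)
    (heq : ∀ x : ℝ, 0 ≤ x →
      (deriv (deriv e) x * (starRingEnd ℂ) (e x)).im =
        q x * ‖e x‖ ^ 2)
    (hlim : Filter.Tendsto (fun x => (deriv e x * (starRingEnd ℂ) (e x)).im)
      Filter.atTop (nhds k)) :
    k = (∫ x in Ioi 0, q x * ‖e x‖ ^ 2) ∧ 0 ≤ k ∧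
      (0 < volume {x | x ∈ Ioi (0:ℝ) ∧ 0 < q x ∧ e x ≠ 0} → 0 < k) := by
  have hderiv : ∀ x ∈ Ioi (0 : ℝ),
      HasDerivAt (fun y => (deriv e y * conj (e y)).im) (q x * ‖e x‖ ^ 2) x := fun x hx =>
    heq x (le_of_lt hx) ▸ he.hasDerivAt_im_deriv_mul_conj x
  have hnonneg : ∀ x, 0 ≤ q x * ‖e x‖ ^ 2 := fun x => by have := hqnn x; positivity
  obtain ⟨hint, hintegral⟩ := integrableOn_Ioi_and_integral_eq_of_hasDerivAt_of_nonneg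
    (he.hasDerivAt_im_deriv_mul_conj 0).continuousAt.continuousWithinAt hderiv
    (fun x _ => hnonneg x) hlim
  have hk : k = ∫ x in Ioi 0, q x * ‖e x‖ ^ 2 := by simp [hintegral, he0]
  refine ⟨hk, hk ▸ setIntegral_nonneg measurableSet_Ioi fun x _ => hnonneg x, fun hpos => ?_⟩
  rw [hk, setIntegral_pos_iff_support_of_nonneg_ae (.of_forall hnonneg) hint]
  refine hpos.trans_le (measure_mono fun x ⟨hx, hqx, hex⟩ => ⟨?_, hx⟩)
  exact (mul_pos hqx (pow_pos (norm_pos_iff.mpr hex) 2)).ne'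

theorem stmt_17 (q : ℝ → ℝ) (hqm : Measurable q) (hqnn : ∀ x, 0 ≤ q x)
    (e : ℝ → ℂ) (he : ContDiff ℝ 2 e) (he0 : e 0 = 0) (k : ℝ)
    (heq : ∀ x : ℝ, 0 ≤ x →
      (deriv (deriv e) x * (starRingEnd ℂ) (e x)).im =
        q x * ‖e x‖ ^ 2)
    (hlim : Filter.Tendsto (fun x => (deriv e x * (starRingEnd ℂ) (e x)).im)
      Filter.atTop (nhds k)) :
    k = (∫ x in Ioi 0, q x * ‖e x‖ ^ 2) ∧ 0 ≤ k ∧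
      (0 < volume {x | x ∈ Ioi (0:ℝ) ∧ 0 < q x ∧ e x ≠ 0} → 0 < k) :=
  stmt_17_general q hqnn e he he0 k heq hlim
end
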